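/- ω₁ can be partitioned into ℵ₁ pairwise disjoint stationary sets; consequently, for any n there exist pairwise disjoint stationary sets S_0,…,S_n whose union is ω₁. -/

import Mathlib

noncomputable section

/-- The first uncountable ordinal. -/
def omega1 : Ordinal := (Cardinal.aleph 1).ord

/-- `C` is closed below `omega1`: it contains all its limit points below `omega1`. -/
def IsClosedIn (C : Set Ordinal) : Prop :=
  ∀ a, a < omega1 → (C ∩ Set.Iio a).Nonempty → sSup (C ∩ Set.Iio a) = a → a ∈ C

/-- `C` is unbounded (cofinal) in `omega1`. -/
def IsUnboundedIn (C : Set Ordinal) : Prop :=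
  ∀ a, a < omega1 → ∃ b ∈ C, a < b

/-- A club subset of `omega1`: closed and unbounded. -/
def IsClubOmega1 (C : Set Ordinal) : Prop :=
  C ⊆ Set.Iio omega1 ∧ IsClosedIn C ∧ IsUnboundedIn C

/-- A stationary subset of `omega1`: meets every club. -/
def IsStationaryOmega1 (S : Set Ordinal) : Prop :=
  S ⊆ Set.Iio omega1 ∧ ∀ C, IsClubOmega1 C → (S ∩ C).Nonempty

section Solovay

open Set

universe u

lemma omega1_isLimit : Order.IsSuccLimit omega1.{u} :=
  Cardinal.isSuccLimit_ord (Cardinal.aleph0_le_aleph 1)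

lemma omega1_pos : 0 < omega1.{u} := omega1_isLimit.pos

lemma succ_lt_omega1 {a : Ordinal.{u}} (h : a < omega1) : Order.succ a < omega1 :=
  omega1_isLimit.succ_lt h

lemma sup_lt_omega1_nat (f : ℕ → Ordinal.{u})
    (h : ∀ i, f i < omega1) : iSup f < omega1 := by
  refine Cardinal.iSup_lt_ord_lift_of_isRegular Cardinal.isRegular_aleph_one ?_ h
  calc Cardinal.lift _ ≤ Cardinal.lift Cardinal.aleph0 :=
        Cardinal.lift_le.2 Cardinal.mk_le_aleph0
  _ = Cardinal.aleph0 := Cardinal.lift_aleph0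
  _ < Cardinal.aleph 1 := Cardinal.aleph0_lt_aleph_one

lemma sup_lt_omega1 {ι : Type v} [Countable ι] (f : ι → Ordinal.{u})
    (h : ∀ i, f i < omega1) : iSup f < omega1 := by
  rcases isEmpty_or_nonempty ι with hι | hι
  · rw [ciSup_of_empty]
    exact omega1_pos
  · obtain ⟨g, hg⟩ := exists_surjective_nat ι
    have hr : Set.range (f ∘ g) = Set.range f := hg.range_comp f
    have : iSup f = iSup (f ∘ g) := by
      show sSup (Set.range f) = sSup (Set.range (f ∘ g))
      rw [hr]
    rw [this]
    exact sup_lt_omega1_nat _ fun k => h (g k)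

lemma aleph_one_eq_succ : Cardinal.aleph.{u} 1 = Order.succ Cardinal.aleph0 := by
  rw [← Cardinal.aleph_zero, ← Cardinal.aleph_succ, Ordinal.succ_zero]

lemma countable_Iio {x : Ordinal.{u}} (hx : x < omega1) : Countable (Set.Iio x) := by
  rw [← Cardinal.mk_le_aleph0_iff, Ordinal.mk_Iio_ordinal]
  have h1 := Cardinal.lt_ord.1 hx
  rw [aleph_one_eq_succ, Order.lt_succ_iff] at h1
  calc Cardinal.lift x.card ≤ Cardinal.lift Cardinal.aleph0 := Cardinal.lift_le.2 h1
  _ = Cardinal.aleph0 := Cardinal.lift_aleph0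

lemma sSup_eq_of_unbdd {s : Set Ordinal.{u}} {a : Ordinal} (hsub : s ⊆ Set.Iio a)
    (hne : s.Nonempty) (h : ∀ β < a, ∃ c ∈ s, β < c) : sSup s = a := by
  apply le_antisymm
  · exact csSup_le hne fun x hx => (hsub hx).le
  · refine le_of_forall_lt fun β hβ => ?_
    obtain ⟨c, hc, hβc⟩ := h β hβ
    exact hβc.trans_le (le_csSup ⟨a, fun x hx => (hsub hx).le⟩ hc)

lemma exists_gt_of_sSup {s : Set Ordinal.{u}} {a β : Ordinal} (hne : s.Nonempty)
    (hs : sSup s = a) (hβ : β < a) : ∃ c ∈ s, β < c := by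
  by_contra h
  push_neg at h
  exact absurd (hs ▸ csSup_le hne h) (not_le.2 hβ)

lemma sSup_eq_of_between {s t : Set Ordinal.{u}} {a : Ordinal} (hst : s ⊆ t)
    (ht : t ⊆ Set.Iio a) (hne : s.Nonempty) (hs : sSup s = a) :
    t.Nonempty ∧ sSup t = a := by
  refine ⟨hne.mono hst, le_antisymm (csSup_le (hne.mono hst) fun x hx => (ht hx).le) ?_⟩
  calc a = sSup s := hs.symm
  _ ≤ sSup t := csSup_le_csSup ⟨a, fun x hx => (ht hx).le⟩ hne hst

lemma seq_limit {b : ℕ → Ordinal.{u}} (hlt : ∀ k, b k < omega1)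
    (hmono : ∀ k, b k < b (k + 1)) :
    (⨆ k, b k) < omega1 ∧ (∀ k, b k < ⨆ k, b k) ∧ Order.IsSuccLimit (⨆ k, b k) := by
  have hsup : (⨆ k, b k) < omega1 := sup_lt_omega1 b hlt
  have hbk : ∀ k, b k < ⨆ k, b k := fun k =>
    (hmono k).trans_le (Ordinal.le_iSup b (k + 1))
  refine ⟨hsup, hbk, Ordinal.isSuccLimit_iff.2 ⟨?_, Order.isSuccPrelimit_of_succ_lt fun β hβ => ?_⟩⟩
  · intro h0
    exact absurd (h0 ▸ hbk 0) not_lt_zero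
  · obtain ⟨k, hk⟩ := Ordinal.lt_iSup_iff.1 hβ
    calc Order.succ β ≤ b k := Order.succ_le_of_lt hk
    _ < b (k + 1) := hmono k
    _ ≤ ⨆ k, b k := Ordinal.le_iSup b (k + 1)

lemma mem_closed_of_seq {C : Set Ordinal.{u}} (hC : IsClosedIn C) {b : ℕ → Ordinal}
    (hlt : ∀ k, b k < omega1) (hmono : ∀ k, b k < b (k + 1))
    (h : ∀ k, ∃ c ∈ C, b k < c ∧ c < ⨆ j, b j) : (⨆ j, b j) ∈ C := by
  obtain ⟨hsup, hbk, _⟩ := seq_limit hlt hmono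
  apply hC _ hsup
  · obtain ⟨c, hc, _, hc2⟩ := h 0
    exact ⟨c, hc, hc2⟩
  · apply sSup_eq_of_unbdd inter_subset_right
    · obtain ⟨c, hc, _, hc2⟩ := h 0
      exact ⟨c, hc, hc2⟩
    · intro β hβ
      obtain ⟨k, hk⟩ := Ordinal.lt_iSup_iff.1 hβ
      obtain ⟨c, hc, hc1, hc2⟩ := h k
      exact ⟨c, ⟨hc, hc2⟩, hk.trans hc1⟩

lemma isClub_Iio : IsClubOmega1 (Set.Iio omega1.{u}) :=
  ⟨subset_rfl, fun a ha _ _ => ha,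
    fun a ha => ⟨Order.succ a, succ_lt_omega1 ha, Order.lt_succ_of_not_isMax (not_isMax a)⟩⟩

lemma exists_seq (F : Ordinal.{u} → Ordinal) (hF : ∀ x, x < omega1 → x < F x ∧ F x < omega1)
    (a : Ordinal) (ha : a < omega1) :
    ∃ b : ℕ → Ordinal, b 0 = a ∧ (∀ k, b (k + 1) = F (b k)) ∧
      (∀ k, b k < omega1) ∧ ∀ k, b k < b (k + 1) := by
  have hlt : ∀ k, F^[k] a < omega1 := by
    intro k
    induction k with
    | zero => exact ha
    | succ k ih =>
      rw [Function.iterate_succ_apply']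
      exact (hF _ ih).2
  refine ⟨fun k => F^[k] a, rfl, fun k => Function.iterate_succ_apply' F k a, hlt, fun k => ?_⟩
  show F^[k] a < F^[k + 1] a
  rw [Function.iterate_succ_apply']
  exact (hF _ (hlt k)).1

lemma isClub_iInter {C : ℕ → Set Ordinal.{u}}
    (h : ∀ i, IsClubOmega1 (C i)) : IsClubOmega1 (⋂ i, C i) := by
  refine ⟨(iInter_subset C 0).trans (h _).1, ?_, ?_⟩
  · intro a ha hne hsup
    refine mem_iInter.2 fun i => (h i).2.1 a ha ?_ ?_
    · exact hne.mono (inter_subset_inter_left _ (iInter_subset C i))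
    · exact (sSup_eq_of_between (inter_subset_inter_left _ (iInter_subset C i))
        inter_subset_right hne hsup).2
  · intro a ha
    choose c hc1 hc2 using fun (x : Ordinal.{u}) (hx : x < omega1) (i : ℕ) => (h i).2.2 x hx
    set F : Ordinal.{u} → Ordinal :=
      fun x => if hx : x < omega1 then Order.succ (⨆ i, c x hx i) else 0 with hFdef
    have hF : ∀ x, x < omega1 → x < F x ∧ F x < omega1 := by
      intro x hx
      rw [hFdef]
      simp only [dif_pos hx]
      constructor
      · exact ((hc2 x hx 0).trans_le
          (Ordinal.le_iSup _ 0)).trans (Order.lt_succ_of_not_isMax (not_isMax _))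
      · exact succ_lt_omega1 (sup_lt_omega1 _ fun i => (h i).1 (hc1 x hx i))
    obtain ⟨b, hb0, hbs, hblt, hbmono⟩ := exists_seq F hF (Order.succ a) (succ_lt_omega1 ha)
    refine ⟨⨆ k, b k, mem_iInter.2 fun i => ?_, ?_⟩
    · apply mem_closed_of_seq (h i).2.1 hblt hbmono
      intro k
      refine ⟨c (b k) (hblt k) i, hc1 _ _ _, hc2 _ _ _, ?_⟩
      have h1 : c (b k) (hblt k) i < b (k + 1) := by
        rw [hbs k, hFdef]
        simp only [dif_pos (hblt k)]
        exact (Ordinal.le_iSup (fun i => c (b k) (hblt k) i) i).trans_lt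
          (Order.lt_succ_of_not_isMax (not_isMax _))
      exact h1.trans ((hbmono (k + 1)).trans_le (Ordinal.le_iSup b (k + 2)))
    · have : a < b 0 := hb0 ▸ Order.lt_succ_of_not_isMax (not_isMax a)
      exact this.trans ((seq_limit hblt hbmono).2.1 0)

end Solovay
section Solovay2

open Set

universe u

/-- The diagonal intersection of a family of subsets of `omega1`. -/
def diagInter (C : Ordinal.{u} → Set Ordinal.{u}) : Set Ordinal.{u} :=
  {x | x < omega1 ∧ ∀ γ < x, x ∈ C γ}

lemma isClub_diagInter {C : Ordinal.{u} → Set Ordinal.{u}} (h : ∀ γ, IsClubOmega1 (C γ)) :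
    IsClubOmega1 (diagInter C) := by
  refine ⟨fun x hx => hx.1, ?_, ?_⟩
  · -- closed
    intro a ha hne hsup
    refine ⟨ha, fun γ hγ => ?_⟩
    have hsub : diagInter C ∩ Set.Iio a ∩ Set.Ioi γ ⊆ C γ ∩ Set.Iio a := by
      rintro x ⟨⟨hx1, hx2⟩, hx3⟩
      exact ⟨hx1.2 γ hx3, hx2⟩
    have hne' : (diagInter C ∩ Set.Iio a ∩ Set.Ioi γ).Nonempty := by
      obtain ⟨c, hc, hγc⟩ := exists_gt_of_sSup hne hsup hγ
      exact ⟨c, hc, hγc⟩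
    have hsup' : sSup (diagInter C ∩ Set.Iio a ∩ Set.Ioi γ) = a := by
      apply sSup_eq_of_unbdd (fun x hx => hx.1.2) hne'
      intro β hβ
      obtain ⟨c, hc, hβc⟩ := exists_gt_of_sSup hne hsup (max_lt hβ hγ)
      exact ⟨c, ⟨hc, lt_of_le_of_lt (le_max_right β γ) hβc⟩,
        lt_of_le_of_lt (le_max_left β γ) hβc⟩
    obtain ⟨hne2, hsup2⟩ := sSup_eq_of_between hsub inter_subset_right hne' hsup'
    exact (h γ).2.1 a ha hne2 hsup2
  · -- unbounded
    intro a ha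
    choose c hc1 hc2 using
      fun (x : Ordinal.{u}) (hx : x < omega1) (γ : Set.Iio x) => (h γ.1).2.2 x hx
    set F : Ordinal.{u} → Ordinal :=
      fun x => if hx : x < omega1 then
        Order.succ (max x (⨆ γ : Set.Iio x, c x hx γ)) else 0 with hFdef
    have hsuplt : ∀ (x : Ordinal.{u}) (hx : x < omega1), (⨆ γ : Set.Iio x, c x hx γ) < omega1 := by
      intro x hx
      have : Countable (Set.Iio x) := countable_Iio hx
      exact sup_lt_omega1 _ fun γ => (h γ.1).1 (hc1 x hx γ)
    have hF : ∀ x, x < omega1 → x < F x ∧ F x < omega1 := by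
      intro x hx
      rw [hFdef]
      simp only [dif_pos hx]
      refine ⟨(le_max_left _ _).trans_lt (Order.lt_succ_of_not_isMax (not_isMax _)), ?_⟩
      exact succ_lt_omega1 (max_lt hx (hsuplt x hx))
    obtain ⟨b, hb0, hbs, hblt, hbmono⟩ := exists_seq F hF (Order.succ a) (succ_lt_omega1 ha)
    have hmonole : ∀ j k : ℕ, j ≤ k → b j ≤ b k := by
      intro j k hjk
      exact (strictMono_nat_of_lt_succ hbmono).monotone hjk
    refine ⟨⨆ k, b k, ⟨(seq_limit hblt hbmono).1, ?_⟩, ?_⟩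
    · intro γ hγ
      obtain ⟨k, hk⟩ := Ordinal.lt_iSup_iff.1 hγ
      -- use shifted sequence
      set b' : ℕ → Ordinal.{u} := fun j => b (k + j) with hb'def
      have hblt' : ∀ j, b' j < omega1 := fun j => hblt (k + j)
      have hbmono' : ∀ j, b' j < b' (j + 1) := fun j => hbmono (k + j)
      have hsupeq : (⨆ j, b' j) = ⨆ k, b k := by
        apply le_antisymm
        · exact Ordinal.iSup_le fun j => Ordinal.le_iSup b (k + j)
        · exact Ordinal.iSup_le fun j =>
            (hmonole j (k + j) (Nat.le_add_left j k)).trans (Ordinal.le_iSup b' j)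
      rw [← hsupeq]
      apply mem_closed_of_seq (h γ).2.1 hblt' hbmono'
      intro j
      have hγbj : γ < b (k + j) := hk.trans_le (hmonole k (k + j) (Nat.le_add_right k j))
      refine ⟨c (b (k + j)) (hblt (k + j)) ⟨γ, hγbj⟩, ?_, ?_, ?_⟩
      · exact hc1 (b (k + j)) (hblt (k + j)) ⟨γ, hγbj⟩
      · exact hc2 _ _ _
      have h1 : c (b (k + j)) (hblt (k + j)) ⟨γ, hγbj⟩ < b (k + j + 1) := by
        rw [hbs (k + j), hFdef]
        simp only [dif_pos (hblt (k + j))]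
        refine lt_of_le_of_lt ?_ (Order.lt_succ_of_not_isMax (not_isMax _))
        exact le_trans (Ordinal.le_iSup
          (fun γ' : Set.Iio (b (k + j)) => c (b (k + j)) (hblt (k + j)) γ') ⟨γ, hγbj⟩)
          (le_max_right _ _)
      rw [hsupeq]
      exact h1.trans (lt_of_lt_of_le (hbmono (k + j + 1)) (Ordinal.le_iSup b (k + j + 2)))
    · have : a < b 0 := hb0 ▸ Order.lt_succ_of_not_isMax (not_isMax a)
      exact this.trans ((seq_limit hblt hbmono).2.1 0)

lemma exists_club_of_not_stat {S : Set Ordinal.{u}} (hsub : S ⊆ Set.Iio omega1)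
    (h : ¬ IsStationaryOmega1 S) : ∃ C, IsClubOmega1 C ∧ ∀ x, x ∈ S → x ∉ C := by
  unfold IsStationaryOmega1 at h
  push_neg at h
  obtain ⟨C, hC, hCC⟩ := h hsub
  exact ⟨C, hC, fun x hx hxC => by
    have : x ∈ S ∩ C := ⟨hx, hxC⟩
    rw [hCC] at this
    exact this⟩

lemma fodor {S : Set Ordinal.{u}} (hS : IsStationaryOmega1 S) {f : Ordinal.{u} → Ordinal.{u}}
    (hf : ∀ α ∈ S, f α < α) : ∃ γ, IsStationaryOmega1 {α ∈ S | f α = γ} := by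
  by_contra hcon
  push_neg at hcon
  have hsub : ∀ γ : Ordinal.{u}, {α ∈ S | f α = γ} ⊆ Set.Iio omega1 :=
    fun γ x hx => hS.1 hx.1
  choose C hC hCav using fun γ => exists_club_of_not_stat (hsub γ) (hcon γ)
  obtain ⟨α, hαS, hαD⟩ := hS.2 (diagInter C) (isClub_diagInter hC)
  exact hCav (f α) α ⟨hαS, rfl⟩ (hαD.2 (f α) (hf α hαS))

lemma stat_mono {S T : Set Ordinal.{u}} (h : IsStationaryOmega1 S) (hST : S ⊆ T)
    (hT : T ⊆ Set.Iio omega1) : IsStationaryOmega1 T :=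
  ⟨hT, fun C hC => ((h.2 C hC).mono (Set.inter_subset_inter_left _ hST))⟩

lemma exists_fundamental {α : Ordinal.{u}} (h1 : α < omega1) (h2 : Order.IsSuccLimit α) :
    ∃ f : ℕ → Ordinal.{u}, (∀ n, f n < α) ∧ (⨆ n, f n) = α := by
  have : Countable (Set.Iio α) := countable_Iio h1
  have : Nonempty (Set.Iio α) := ⟨0, h2.pos⟩
  obtain ⟨g, hg⟩ := exists_surjective_nat (Set.Iio α)
  refine ⟨fun n => (g n).1, fun n => (g n).2, ?_⟩
  apply le_antisymm
  · exact Ordinal.iSup_le fun n => ((g n).2 : (g n).1 < α).le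
  · refine le_of_forall_lt fun β hβ => ?_
    obtain ⟨n, hn⟩ := hg ⟨Order.succ β, h2.succ_lt hβ⟩
    have : (g n).1 = Order.succ β := by rw [hn]
    calc β < Order.succ β := Order.lt_succ_of_not_isMax (not_isMax β)
    _ = (g n).1 := this.symm
    _ ≤ ⨆ n, (g n).1 := Ordinal.le_iSup (fun n => (g n).1) n

end Solovay2
section Solovay3

open Set

universe u

lemma solovay_partition : ∃ S : Ordinal.{u} → Set Ordinal.{u},
    (∀ α, α < omega1 → IsStationaryOmega1 (S α)) ∧
    (∀ α β, α < omega1 → β < omega1 → α ≠ β → Disjoint (S α) (S β)) ∧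
    ⋃ α ∈ Set.Iio omega1, S α = Set.Iio omega1 := by
  classical
  set Λ : Set Ordinal.{u} := {α | α < omega1 ∧ Order.IsSuccLimit α} with hΛdef
  -- fundamental sequences
  have hFex : ∀ α : Ordinal.{u}, ∃ f : ℕ → Ordinal.{u},
      α < omega1 → Order.IsSuccLimit α → (∀ n, f n < α) ∧ (⨆ n, f n) = α := by
    intro α
    by_cases h1 : α < omega1 ∧ Order.IsSuccLimit α
    · obtain ⟨f, hf⟩ := exists_fundamental h1.1 h1.2
      exact ⟨f, fun _ _ => hf⟩
    · exact ⟨fun _ => 0, fun ha hb => absurd ⟨ha, hb⟩ h1⟩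
  choose F hF using hFex
  -- Step 1
  have step1 : ∃ n : ℕ, ∀ β, β < omega1 → IsStationaryOmega1 {α | α ∈ Λ ∧ β < F α n} := by
    by_contra hcon
    push_neg at hcon
    choose β hβ hnot using hcon
    choose C hC hCav using fun n => exists_club_of_not_stat
      (fun x (hx : x ∈ {α | α ∈ Λ ∧ β n < F α n}) => hx.1.1) (hnot n)
    have hD : IsClubOmega1 (⋂ n, C n) := isClub_iInter hC
    set β' : Ordinal.{u} := ⨆ n, β n with hβ'def
    have hβ'lt : β' < omega1 := sup_lt_omega1 β hβ
    choose d hd1 hd2 using fun (x : Ordinal.{u}) (hx : x < omega1) => hD.2.2 x hx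
    set F' : Ordinal.{u} → Ordinal := fun x => if hx : x < omega1 then d x hx else 0 with hF'def
    have hF' : ∀ x, x < omega1 → x < F' x ∧ F' x < omega1 := by
      intro x hx
      rw [hF'def]
      simp only [dif_pos hx]
      exact ⟨hd2 x hx, hD.1 (hd1 x hx)⟩
    obtain ⟨b, hb0, hbs, hblt, hbmono⟩ := exists_seq F' hF' β' hβ'lt
    obtain ⟨hαlt, hbk, hαlim⟩ := seq_limit hblt hbmono
    have hαD : (⨆ k, b k) ∈ ⋂ n, C n := by
      apply mem_closed_of_seq hD.2.1 hblt hbmono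
      intro k
      refine ⟨b (k + 1), ?_, hbmono k, hbk (k + 1)⟩
      rw [hbs k, hF'def]
      simp only [dif_pos (hblt k)]
      exact hd1 _ _
    have hαΛ : (⨆ k, b k) ∈ Λ := ⟨hαlt, hαlim⟩
    have hcontr : ∀ m : ℕ, F (⨆ k, b k) m ≤ β m := by
      intro m
      by_contra hlt
      push_neg at hlt
      exact hCav m _ ⟨hαΛ, hlt⟩ (Set.mem_iInter.1 hαD m)
    have hle : (⨆ k, b k) ≤ β' := by
      have h2 := (hF _ hαlt hαlim).2
      rw [← h2]
      exact Ordinal.iSup_le fun m => (hcontr m).trans (Ordinal.le_iSup β m)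
    exact absurd (hb0 ▸ hbk 0 : β' < ⨆ k, b k) (not_lt.2 hle)
  obtain ⟨n, hn⟩ := step1
  set A : Ordinal.{u} → Set Ordinal.{u} := fun γ => {α | α ∈ Λ ∧ F α n = γ} with hAdef
  have hAsub : ∀ γ, A γ ⊆ Set.Iio omega1 := fun γ x hx => hx.1.1
  have hAdisj : ∀ γ γ', γ ≠ γ' → Disjoint (A γ) (A γ') := by
    intro γ γ' hne
    rw [Set.disjoint_left]
    rintro x ⟨_, h1⟩ ⟨_, h2⟩
    exact hne (h1 ▸ h2 ▸ rfl)
  -- Step 2 : stationary A γ for unboundedly many γ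
  have hstep2 : ∀ β, β < omega1 → ∃ γ, β < γ ∧ γ < omega1 ∧ IsStationaryOmega1 (A γ) := by
    intro β hβ
    have hstatS : IsStationaryOmega1 {α | α ∈ Λ ∧ β < F α n} := hn β hβ
    have hreg : ∀ α ∈ {α | α ∈ Λ ∧ β < F α n}, (fun α => F α n) α < α :=
      fun α hα => (hF α hα.1.1 hα.1.2).1 n
    obtain ⟨γ, hγstat⟩ := fodor hstatS hreg
    obtain ⟨α₀, hα₀, -⟩ := hγstat.2 _ isClub_Iio
    have hβγ : β < γ := hα₀.2 ▸ hα₀.1.2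
    have hγlt : γ < omega1 := by
      have h3 : F α₀ n < α₀ := (hF α₀ hα₀.1.1.1 hα₀.1.1.2).1 n
      exact (hα₀.2 ▸ h3).trans hα₀.1.1.1
    refine ⟨γ, hβγ, hγlt, stat_mono hγstat ?_ (hAsub γ)⟩
    rintro x ⟨⟨hxΛ, -⟩, hx2⟩
    exact ⟨hxΛ, hx2⟩
  have hhex : ∀ β : Ordinal.{u}, ∃ γ, β < omega1 →
      (β < γ ∧ γ < omega1 ∧ IsStationaryOmega1 (A γ)) := by
    intro β
    by_cases hβ : β < omega1
    · obtain ⟨γ, h⟩ := hstep2 β hβ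
      exact ⟨γ, fun _ => h⟩
    · exact ⟨0, fun h => absurd h hβ⟩
  choose hfun hh using hhex
  -- enumeration of stationary values
  set G : Set Ordinal.{u} := {γ | γ < omega1 ∧ IsStationaryOmega1 (A γ)} with hGdef
  set s : Set Ordinal.{u} := G ∪ Set.Ici omega1 with hsdef
  have hs : ¬ BddAbove s := by
    rintro ⟨x, hx⟩
    have h1 : max omega1 (Order.succ x) ∈ s := Or.inr (Set.mem_Ici.2 (le_max_left _ _))
    have h2 := hx h1
    exact absurd ((le_max_right omega1 (Order.succ x)).trans h2)
      (Order.lt_succ_of_not_isMax (not_isMax x)).not_ge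
  set e := Ordinal.enumOrd s with hedef
  have he : ∀ α, α < omega1 → e α < omega1 ∧ e α ∈ G := by
    intro α
    induction α using Ordinal.induction with
    | _ α ih =>
    intro hα
    have hcnt : Countable (Set.Iio α) := countable_Iio hα
    have hσlt : (⨆ β : Set.Iio α, e β.1) < omega1 :=
      sup_lt_omega1 _ fun β => (ih β.1 β.2 (β.2.trans hα)).1
    have hγ := hh _ hσlt
    have hγs : hfun (⨆ β : Set.Iio α, e β.1) ∈ s := Or.inl ⟨hγ.2.1, hγ.2.2⟩
    have hle : e α ≤ hfun (⨆ β : Set.Iio α, e β.1) := by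
      apply Ordinal.enumOrd_le_of_forall_lt hγs
      intro b hb
      calc e b ≤ ⨆ β : Set.Iio α, e β.1 :=
            Ordinal.le_iSup (fun β : Set.Iio α => e β.1) ⟨b, hb⟩
      _ < _ := hγ.1
    have helt : e α < omega1 := hle.trans_lt hγ.2.1
    rcases Ordinal.enumOrd_mem hs α with h | h
    · exact ⟨helt, h⟩
    · exact absurd helt (not_lt.2 h)
  have heinj : Function.Injective e := Ordinal.enumOrd_injective hs
  -- the partition
  set SS : Ordinal.{u} → Set Ordinal.{u} := fun α => if α = 0 then
      Set.Iio omega1 \ ⋃ β ∈ Set.Iio omega1 \ {0}, A (e β) else A (e α) with hSSdef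
  have hSS0 : SS 0 = Set.Iio omega1 \ ⋃ β ∈ Set.Iio omega1 \ {0}, A (e β) := if_pos rfl
  have hSSne : ∀ α, α ≠ 0 → SS α = A (e α) := fun α hα => if_neg hα
  have hA0sub : A (e 0) ⊆ SS 0 := by
    intro x hx
    rw [hSS0]
    refine ⟨hAsub _ hx, ?_⟩
    intro hmem
    obtain ⟨β, hβ, hxβ⟩ := Set.mem_iUnion₂.1 hmem
    have : e β = e 0 := by
      by_contra hne
      exact (Set.disjoint_left.1 (hAdisj _ _ hne) hxβ) hx
    exact hβ.2 (heinj this)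
  have hSSsub : ∀ α, SS α ⊆ Set.Iio omega1 := by
    intro α
    by_cases hα : α = 0
    · rw [hα, hSS0]
      exact Set.diff_subset
    · rw [hSSne α hα]
      exact hAsub _
  have hSSstat : ∀ α, α < omega1 → IsStationaryOmega1 (SS α) := by
    intro α hα
    by_cases hα0 : α = 0
    · subst hα0
      exact stat_mono (he 0 omega1_pos).2.2 hA0sub (hSSsub 0)
    · rw [hSSne α hα0]
      exact (he α hα).2.2
  have hkey : ∀ β, β < omega1 → β ≠ 0 → Disjoint (SS 0) (SS β) := by
    intro β hβ hβ0
    rw [hSS0, hSSne β hβ0, Set.disjoint_left]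
    rintro x ⟨-, hx2⟩ hxβ
    exact hx2 (Set.mem_iUnion₂.2 ⟨β, ⟨hβ, hβ0⟩, hxβ⟩)
  refine ⟨SS, hSSstat, ?_, ?_⟩
  · intro α β hα hβ hne
    by_cases hα0 : α = 0
    · subst hα0
      exact hkey β hβ (Ne.symm hne)
    · by_cases hβ0 : β = 0
      · subst hβ0
        exact (hkey α hα hα0).symm
      · rw [hSSne α hα0, hSSne β hβ0]
        exact hAdisj _ _ (heinj.ne hne)
  · ext x
    constructor
    · intro hx
      obtain ⟨α, hα, hxα⟩ := Set.mem_iUnion₂.1 hx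
      exact hSSsub α hxα
    · intro hx
      by_cases hu : x ∈ ⋃ β ∈ Set.Iio omega1 \ {0}, A (e β)
      · obtain ⟨β, hβ, hxβ⟩ := Set.mem_iUnion₂.1 hu
        refine Set.mem_iUnion₂.2 ⟨β, hβ.1, ?_⟩
        rw [hSSne β hβ.2]
        exact hxβ
      · refine Set.mem_iUnion₂.2 ⟨0, omega1_pos, ?_⟩
        rw [hSS0]
        exact ⟨hx, hu⟩

end Solovay3
section Solovay4

universe u v

lemma lift_omega1 : Ordinal.lift.{v} omega1.{u} = omega1.{max u v} := by
  show Ordinal.lift.{v} (Cardinal.aleph 1).ord = (Cardinal.aleph 1).ord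
  rw [Cardinal.lift_ord, Cardinal.lift_aleph, Ordinal.lift_one]

lemma omega1_transfer {α : Ordinal.{u}} (hα : α < omega1) :
    ∃ γ : Ordinal.{v}, γ < omega1 ∧ Ordinal.lift.{u} γ = Ordinal.lift.{v} α := by
  have h1 : Ordinal.lift.{v} α < Ordinal.lift.{u} omega1.{v} := by
    rw [lift_omega1]
    calc Ordinal.lift.{v} α < Ordinal.lift.{v} omega1.{u} := Ordinal.lift_lt.2 hα
    _ = omega1.{max u v} := lift_omega1
  exact Ordinal.lt_lift_iff.1 h1

lemma solovay_partition₂ : ∃ S : Ordinal.{u} → Set Ordinal.{v},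
    (∀ α, α < omega1 → IsStationaryOmega1 (S α)) ∧
    (∀ α β, α < omega1 → β < omega1 → α ≠ β → Disjoint (S α) (S β)) ∧
    ⋃ α ∈ Set.Iio omega1, S α = Set.Iio omega1 := by
  classical
  obtain ⟨S₂, h1, h2, h3⟩ := solovay_partition.{v}
  have hdown : ∀ α : Ordinal.{u}, ∃ γ : Ordinal.{v}, α < omega1 →
      (γ < omega1 ∧ Ordinal.lift.{u} γ = Ordinal.lift.{v} α) := by
    intro α
    by_cases hα : α < omega1
    · obtain ⟨γ, h⟩ := omega1_transfer.{u, v} hα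
      exact ⟨γ, fun _ => h⟩
    · exact ⟨0, fun h => absurd h hα⟩
  choose down hd using hdown
  have hdinj : ∀ α β, α < omega1 → β < omega1 → down α = down β → α = β := by
    intro α β hα hβ heq
    have e1 := (hd α hα).2
    have e2 := (hd β hβ).2
    rw [heq, e2] at e1
    exact (Ordinal.lift_inj.1 e1).symm
  have hdsurj : ∀ γ : Ordinal.{v}, γ < omega1 → ∃ α, α < omega1 ∧ down α = γ := by
    intro γ hγ
    obtain ⟨α, hα, heq⟩ := omega1_transfer.{v, u} hγ
    refine ⟨α, hα, ?_⟩
    exact Ordinal.lift_inj.1 ((hd α hα).2.trans heq)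
  refine ⟨fun α => if h : α < omega1 then S₂ (down α) else ∅, ?_, ?_, ?_⟩
  · intro α hα
    show IsStationaryOmega1 (if h : α < omega1 then S₂ (down α) else ∅)
    rw [dif_pos hα]
    exact h1 _ (hd α hα).1
  · intro α β hα hβ hne
    show Disjoint (if h : α < omega1 then S₂ (down α) else ∅)
      (if h : β < omega1 then S₂ (down β) else ∅)
    rw [dif_pos hα, dif_pos hβ]
    refine h2 _ _ (hd α hα).1 (hd β hβ).1 ?_
    intro heq
    exact hne (hdinj α β hα hβ heq)
  · ext x
    constructor
    · intro hx
      obtain ⟨α, hα, hxα⟩ := Set.mem_iUnion₂.1 hx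
      simp only [dif_pos (show α < omega1 from hα)] at hxα
      exact (h1 _ (hd α hα).1).1 hxα
    · intro hx
      rw [← h3] at hx
      obtain ⟨γ, hγ, hxγ⟩ := Set.mem_iUnion₂.1 hx
      obtain ⟨α, hα, hαγ⟩ := hdsurj γ hγ
      refine Set.mem_iUnion₂.2 ⟨α, hα, ?_⟩
      simp only [dif_pos hα, hαγ]
      exact hxγ

end Solovay4
theorem stmt19 :
    (∃ S : Ordinal → Set Ordinal,
        (∀ α, α < omega1 → IsStationaryOmega1 (S α)) ∧
        (∀ α β, α < omega1 → β < omega1 → α ≠ β → Disjoint (S α) (S β)) ∧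
        ⋃ α ∈ Set.Iio omega1, S α = Set.Iio omega1) ∧
      ∀ n : ℕ, ∃ T : Fin (n + 1) → Set Ordinal,
        (∀ i, IsStationaryOmega1 (T i)) ∧ (Pairwise fun i j => Disjoint (T i) (T j)) ∧
        ⋃ i, T i = Set.Iio omega1 := by
  classical
  have hnat : ∀ k : ℕ, (k : Ordinal) < omega1 := by
    intro k
    calc (k : Ordinal) < Ordinal.omega0 := Ordinal.nat_lt_omega0 k
    _ ≤ omega1 := by
      rw [← Cardinal.ord_aleph0]
      exact Cardinal.ord_le_ord.2 (Cardinal.aleph0_le_aleph 1)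
  obtain ⟨S, h1, h2, h3⟩ := solovay_partition
  refine ⟨solovay_partition₂, ?_⟩
  intro n
  set T : Fin (n + 1) → Set Ordinal := fun i => if (i : ℕ) < n then S ((i : ℕ) : Ordinal)
    else Set.Iio omega1 \ ⋃ j : Fin n, S ((j : ℕ) : Ordinal) with hTdef
  have hTlt : ∀ i : Fin (n + 1), (i : ℕ) < n → T i = S ((i : ℕ) : Ordinal) :=
    fun i hi => if_pos hi
  have hTlast : ∀ i : Fin (n + 1), ¬ (i : ℕ) < n →
      T i = Set.Iio omega1 \ ⋃ j : Fin n, S ((j : ℕ) : Ordinal) :=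
    fun i hi => if_neg hi
  have hvallast : ∀ i : Fin (n + 1), ¬ (i : ℕ) < n → (i : ℕ) = n :=
    fun i hi => Nat.le_antisymm (Nat.lt_succ_iff.1 i.2) (not_lt.1 hi)
  have hSn_sub : S ((n : ℕ) : Ordinal) ⊆ Set.Iio omega1 \ ⋃ j : Fin n, S ((j : ℕ) : Ordinal) := by
    intro x hx
    refine ⟨(h1 _ (hnat n)).1 hx, ?_⟩
    intro hmem
    obtain ⟨j, hxj⟩ := Set.mem_iUnion.1 hmem
    have hne : ((n : ℕ) : Ordinal) ≠ ((j : ℕ) : Ordinal) := by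
      intro heq
      exact absurd (Nat.cast_injective heq).symm (Nat.ne_of_lt j.2)
    exact (Set.disjoint_left.1 (h2 _ _ (hnat n) (hnat j) hne) hx) hxj
  refine ⟨T, ?_, ?_, ?_⟩
  · intro i
    by_cases hi : (i : ℕ) < n
    · rw [hTlt i hi]
      exact h1 _ (hnat i)
    · rw [hTlast i hi]
      exact stat_mono (h1 _ (hnat n)) hSn_sub Set.diff_subset
  · intro i j hij
    by_cases hi : (i : ℕ) < n
    · by_cases hj : (j : ℕ) < n
      · rw [hTlt i hi, hTlt j hj]
        refine h2 _ _ (hnat i) (hnat j) ?_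
        intro heq
        exact hij (Fin.val_injective (Nat.cast_injective heq))
      · rw [hTlt i hi, hTlast j hj, Set.disjoint_left]
        intro x hxi hxj
        exact hxj.2 (Set.mem_iUnion.2 ⟨⟨(i : ℕ), hi⟩, hxi⟩)
    · by_cases hj : (j : ℕ) < n
      · rw [hTlast i hi, hTlt j hj, Set.disjoint_left]
        intro x hxi hxj
        exact hxi.2 (Set.mem_iUnion.2 ⟨⟨(j : ℕ), hj⟩, hxj⟩)
      · exact absurd (Fin.val_injective ((hvallast i hi).trans (hvallast j hj).symm)) hij
  · ext x
    constructor
    · intro hx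
      obtain ⟨i, hxi⟩ := Set.mem_iUnion.1 hx
      by_cases hi : (i : ℕ) < n
      · rw [hTlt i hi] at hxi
        exact (h1 _ (hnat i)).1 hxi
      · rw [hTlast i hi] at hxi
        exact hxi.1
    · intro hx
      by_cases hex : ∃ j : Fin n, x ∈ S ((j : ℕ) : Ordinal)
      · obtain ⟨j, hxj⟩ := hex
        refine Set.mem_iUnion.2 ⟨⟨(j : ℕ), Nat.lt_succ_of_lt j.2⟩, ?_⟩
        rw [hTlt _ (show ((⟨(j : ℕ), Nat.lt_succ_of_lt j.2⟩ : Fin (n + 1)) : ℕ) < n from j.2)]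
        exact hxj
      · refine Set.mem_iUnion.2 ⟨Fin.last n, ?_⟩
        rw [hTlast (Fin.last n) (by simp [Fin.last])]
        refine ⟨hx, ?_⟩
        intro hmem
        obtain ⟨j, hxj⟩ := Set.mem_iUnion.1 hmem
        exact hex ⟨j, hxj⟩
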